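/- arXiv:2108.01732 — 2 statements merged into one kernel-verified Lean document; each statement's English description precedes it below -/
import Mathlib

section
/- Let n ≥ 3, let K ⊂ ℝ^n be a strictly convex body, and let x ∈ ℝ^n \ K. Then the graze C_x ∩ bd K (the intersection of the support double-cone of K with apex x with the boundary of K) is the image of a topological embedding of the sphere S^{n−2} into ℝ^n. -/
open Set Metric RealInnerProductSpace

noncomputable section

/-- Euclidean space ℝ^n. -/
abbrev Euc (n : ℕ) := EuclideanSpace ℝ (Fin n)

/-- The solid double-cone generated by a convex body `K` and a point `x`:
the union of all lines through `x` and a point of `K`. -/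
def solidCone {n : ℕ} (K : Set (Euc n)) (x : Euc n) : Set (Euc n) :=
  ⋃ y ∈ K, (affineSpan ℝ ({x, y} : Set (Euc n)) : Set (Euc n))

/-- The support double-cone of `K` with apex `x`: the topological frontier of
the solid double-cone. -/
def supportCone {n : ℕ} (K : Set (Euc n)) (x : Euc n) : Set (Euc n) :=
  frontier (solidCone K x)

/-- A convex body: a compact convex set with nonempty interior. -/
def IsConvexBody {n : ℕ} (K : Set (Euc n)) : Prop :=
  IsCompact K ∧ Convex ℝ K ∧ (interior K).Nonempty

/-- `M` is the image of a topological embedding of the sphere `S^m ⊆ ℝ^(m+1)`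
into ℝ^n: a continuous injective map from the unit sphere with range `M`
(such a map from the compact sphere is automatically a homeomorphism onto its
image). -/
def IsSphereEmbeddingImage {n : ℕ} (m : ℕ) (M : Set (Euc n)) : Prop :=
  ∃ f : Metric.sphere (0 : Euc (m + 1)) 1 → Euc n,
    Continuous f ∧ Function.Injective f ∧ Set.range f = M

namespace GrazeAux

variable {n : ℕ} (u x : Euc n)

def aC (y : Euc n) : ℝ := ⟪u, y - x⟫

def gP (y : Euc n) : Euc n := (aC u x y)⁻¹ • (y - x - aC u x y • u)

lemma aC_cont : Continuous (aC u x) :=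
  continuous_const.inner (continuous_id.sub continuous_const)

variable {u}

lemma inner_self_one (hu : ‖u‖ = 1) : ⟪u, u⟫ = (1 : ℝ) := by
  rw [real_inner_self_eq_norm_mul_norm, hu, mul_one]

lemma aC_shift (hu : ‖u‖ = 1) (α : ℝ) {ρ : Euc n} (hρ : ⟪u, ρ⟫ = (0 : ℝ)) :
    aC u x (x + α • u + ρ) = α := by
  have h : x + α • u + ρ - x = α • u + ρ := by abel
  rw [aC, h, inner_add_right, real_inner_smul_right, hρ, inner_self_one hu]
  ring

lemma gP_shift (hu : ‖u‖ = 1) (α : ℝ) {ρ : Euc n} (hρ : ⟪u, ρ⟫ = (0 : ℝ)) :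
    gP u x (x + α • u + ρ) = α⁻¹ • ρ := by
  rw [gP, aC_shift x hu α hρ]
  congr 1
  abel

lemma inner_rho (hu : ‖u‖ = 1) (y : Euc n) :
    ⟪u, y - x - aC u x y • u⟫ = (0 : ℝ) := by
  rw [inner_sub_right, real_inner_smul_right, inner_self_one hu, aC]
  ring

lemma inner_gP (hu : ‖u‖ = 1) (y : Euc n) : ⟪u, gP u x y⟫ = (0 : ℝ) := by
  rw [gP, real_inner_smul_right, inner_rho x hu, mul_zero]

lemma gP_mem (hu : ‖u‖ = 1) (y : Euc n) : gP u x y ∈ (ℝ ∙ u)ᗮ :=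
  Submodule.mem_orthogonal_singleton_iff_inner_right.mpr (inner_gP x hu y)

lemma decomp {y : Euc n} (hy : aC u x y ≠ 0) :
    y = x + aC u x y • u + aC u x y • gP u x y := by
  rw [gP, smul_inv_smul₀ hy]
  abel

lemma aC_self : aC u x x = 0 := by simp [aC]

lemma solidCone_eq (hu : ‖u‖ = 1) (K : Set (Euc n)) (hKne : K.Nonempty)
    (hpos : ∀ y ∈ K, 0 < aC u x y) :
    solidCone K x = {x} ∪ {z | aC u x z ≠ 0 ∧ ∃ y ∈ K, gP u x y = gP u x z} := by
  ext z
  constructor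
  · intro hz
    rw [solidCone, mem_iUnion₂] at hz
    obtain ⟨y, hy, hzy⟩ := hz
    have hzy' : (z - x) +ᵥ x ∈ line[ℝ, x, y] := by
      simpa [vadd_eq_add, sub_add_cancel] using hzy
    obtain ⟨t, ht⟩ := (vadd_left_mem_affineSpan_pair).mp hzy'
    rw [vsub_eq_sub] at ht
    have hay := (hpos y hy).ne'
    rcases eq_or_ne t 0 with rfl | htne
    · left
      have : z - x = 0 := by rw [← ht, zero_smul]
      simp [sub_eq_zero.mp this]
    · right
      have hz1 : z = x + (t * aC u x y) • u + t • (y - x - aC u x y • u) := by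
        have : z = x + t • (y - x) := sub_eq_iff_eq_add'.mp ht.symm
        rw [this]
        module
      have hρ : ⟪u, t • (y - x - aC u x y • u)⟫ = (0 : ℝ) := by
        rw [real_inner_smul_right, inner_rho x hu, mul_zero]
      constructor
      · rw [hz1, aC_shift x hu _ hρ]
        exact mul_ne_zero htne hay
      · refine ⟨y, hy, ?_⟩
        rw [hz1, gP_shift x hu _ hρ, gP, smul_smul]
        congr 1
        field_simp
  · rintro (hz | ⟨haz, y, hy, hgy⟩)
    · obtain ⟨y₀, hy₀⟩ := hKne
      rw [mem_singleton_iff] at hz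
      rw [hz, solidCone, mem_iUnion₂]
      exact ⟨y₀, hy₀, left_mem_affineSpan_pair ℝ x y₀⟩
    · have hay := (hpos y hy).ne'
      rw [solidCone, mem_iUnion₂]
      refine ⟨y, hy, ?_⟩
      have key : ((aC u x z / aC u x y) • (y -ᵥ x)) +ᵥ x = z := by
        rw [vsub_eq_sub, vadd_eq_add]
        have h1' : y - x = aC u x y • u + aC u x y • gP u x y := by
          rw [gP, smul_inv_smul₀ hay]; abel
        have h2' : z - x = aC u x z • u + aC u x z • gP u x y := by
          rw [hgy, gP, smul_inv_smul₀ haz]; abel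
        rw [h1']
        have hs : (aC u x z / aC u x y) • (aC u x y • u + aC u x y • gP u x y)
            = aC u x z • u + aC u x z • gP u x y := by
          match_scalars <;> field_simp
        rw [hs, ← h2']
        abel
      have := AffineMap.lineMap_mem_affineSpan_pair (k := ℝ) (aC u x z / aC u x y) x y
      rwa [AffineMap.lineMap_apply, key] at this

end GrazeAux

set_option maxHeartbeats 2000000 in
open GrazeAux in
/-- For a strictly convex body `K` in ℝ^n (n ≥ 3) and a point
`x ∉ K`, the graze `C_x ∩ bd K` is the image of a topological embedding of
the sphere `S^(n-2)`. -/
theorem stmt_1 (n : ℕ) (hn : 3 ≤ n) (K : Set (Euc n))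
    (hK : IsConvexBody K) (hKs : StrictConvex ℝ K)
    (x : Euc n) (hx : x ∉ K) :
    IsSphereEmbeddingImage (n - 2) (supportCone K x ∩ frontier K) := by
  classical
  obtain ⟨hKc, hKconv, hKint⟩ := hK
  have hKne : K.Nonempty := hKint.mono interior_subset
  -- Separating hyperplane
  obtain ⟨φ, sep, hφx, hφK⟩ := geometric_hahn_banach_point_closed hKconv hKc.isClosed hx
  set v : Euc n := (InnerProductSpace.toDual ℝ (Euc n)).symm φ with hvdef
  have hvφ : ∀ y, ⟪v, y⟫ = φ y := fun y => InnerProductSpace.toDual_symm_apply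
  have hvne : v ≠ 0 := by
    rintro h0
    obtain ⟨y₀, hy₀⟩ := hKne
    have h1 := hφK y₀ hy₀
    have h2 : φ y₀ = 0 := by rw [← hvφ, h0, inner_zero_left]
    have h3 : φ x = 0 := by rw [← hvφ, h0, inner_zero_left]
    linarith
  have hvnorm : (0 : ℝ) < ‖v‖ := norm_pos_iff.mpr hvne
  set u : Euc n := ‖v‖⁻¹ • v with hudef
  have hu : ‖u‖ = 1 := norm_smul_inv_norm hvne
  set c : ℝ := ‖v‖⁻¹ * (sep - φ x) with hcdef
  have hc : 0 < c := mul_pos (inv_pos.mpr hvnorm) (by linarith)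
  have haCφ : ∀ y, aC u x y = ‖v‖⁻¹ * (φ y - φ x) := by
    intro y
    rw [aC, hudef, real_inner_smul_left, hvφ, map_sub]
  have hlow : ∀ y ∈ K, c ≤ aC u x y := by
    intro y hy
    rw [haCφ, hcdef]
    have h1 := hφK y hy
    have h2 : sep - φ x ≤ φ y - φ x := by linarith
    exact mul_le_mul_of_nonneg_left h2 (inv_pos.mpr hvnorm).le
  have hpos : ∀ y ∈ K, 0 < aC u x y := fun y hy => lt_of_lt_of_le hc (hlow y hy)
  clear_value v u c
  have hCone := solidCone_eq x hu K hKne hpos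
  -- The hyperplane direction space and the projective map into it
  set W : Submodule ℝ (Euc n) := (ℝ ∙ u)ᗮ with hWdef
  set g' : Euc n → ↥W := fun y => ⟨gP u x y, gP_mem x hu y⟩ with hg'def
  set B : Set ↥W := g' '' K with hBdef
  -- convexity of B
  have hBconv : Convex ℝ B := by
    rintro b1 ⟨y, hy, rfl⟩ b2 ⟨z, hz, rfl⟩ a b ha hb hab
    have hay := hpos y hy
    have haz := hpos z hz
    set gy := gP u x y with hgydef
    set gz := gP u x z with hgzdef
    set ay := aC u x y with haydef
    set az := aC u x z with hazdef
    set p := a / ay with hpdef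
    set q := b / az with hqdef
    have hp0 : 0 ≤ p := div_nonneg ha hay.le
    have hq0 : 0 ≤ q := div_nonneg hb haz.le
    have hpq : 0 < p + q := by
      rcases lt_or_ge 0 a with ha' | ha'
      · exact lt_of_lt_of_le (div_pos ha' hay) (le_add_of_nonneg_right hq0)
      · have hb' : 0 < b := by nlinarith
        exact lt_of_lt_of_le (div_pos hb' haz) (le_add_of_nonneg_left hp0)
    set D := (p + q)⁻¹ with hDdef
    have hD : 0 < D := inv_pos.mpr hpq
    set lam := p * D with hlamdef
    set mu := q * D with hmudef
    have hsum : lam + mu = 1 := by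
      rw [hlamdef, hmudef, hDdef]
      field_simp
    have hw : lam • y + mu • z ∈ K :=
      hKconv hy hz (mul_nonneg hp0 hD.le) (mul_nonneg hq0 hD.le) hsum
    have hy1 : y = x + ay • u + ay • gy := decomp x hay.ne'
    have hz1 : z = x + az • u + az • gz := decomp x haz.ne'
    have e1 : lam * ay = a * D := by
      rw [hlamdef, hpdef]; field_simp
    have e2 : mu * az = b * D := by
      rw [hmudef, hqdef]; field_simp
    have e3 : lam + mu = 1 := hsum
    clear_value gy gz ay az p q D lam mu
    have hwx : lam • y + mu • z = x + D • u + D • (a • gy + b • gz) := by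
      rw [hy1, hz1]
      match_scalars
      all_goals
        first
        | linear_combination e3
        | linear_combination e1
        | linear_combination e2
        | linear_combination e1 + e2 + D * hab
        | ring
    have hρ : ⟪u, D • (a • gy + b • gz)⟫ = (0 : ℝ) := by
      rw [real_inner_smul_right, inner_add_right, real_inner_smul_right,
        real_inner_smul_right, hgydef, hgzdef, inner_gP x hu, inner_gP x hu]
      ring
    have hgw : gP u x (lam • y + mu • z) = a • gy + b • gz := by
      rw [hwx, gP_shift x hu _ hρ, inv_smul_smul₀ hD.ne']
    refine ⟨lam • y + mu • z, hw, ?_⟩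
    apply Subtype.ext
    simp only [hg'def, Submodule.coe_add, Submodule.coe_smul]
    rw [hgw, hgydef, hgzdef]
  -- continuity of the projective map where aC > 0
  set U : Set (Euc n) := {w | 0 < aC u x w} with hUdef
  have hUopen : IsOpen U := isOpen_lt continuous_const (aC_cont u x)
  have hUmem : ∀ w : Euc n, w ∈ U ↔ 0 < aC u x w := fun w => Iff.rfl
  have hgPcont : ContinuousOn (gP u x) U := by
    refine ContinuousOn.smul (f := fun y => (aC u x y)⁻¹) (g := fun y => y - x - aC u x y • u) ?_ ?_
    · exact ((aC_cont u x).continuousOn).inv₀ fun w hw => ((hUmem w).mp hw).ne'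
    · exact Continuous.continuousOn
        ((continuous_id.sub continuous_const).sub ((aC_cont u x).smul continuous_const))
  have hg'cont : ContinuousOn g' U :=
    continuousOn_iff_continuous_restrict.mpr (hgPcont.restrict.subtype_mk _)
  have hKU : K ⊆ U := fun y hy => hpos y hy
  -- compactness etc of B
  have hBcompact : IsCompact B := hKc.image_of_continuousOn (hg'cont.mono hKU)
  have hBclosed : IsClosed B := hBcompact.isClosed
  have hKsub : K ⊆ solidCone K x := by
    intro y hy
    rw [solidCone, mem_iUnion₂]
    exact ⟨y, hy, right_mem_affineSpan_pair ℝ x y⟩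
  -- Lemma A
  have lemA : ∀ p : Euc n, 0 < aC u x p → p ∈ interior (solidCone K x) →
      g' p ∈ interior B := by
    intro p hap hp
    obtain ⟨ε, hε, hball⟩ := Metric.mem_nhds_iff.mp (mem_interior_iff_mem_nhds.mp hp)
    rw [mem_interior_iff_mem_nhds]
    refine Filter.mem_of_superset (Metric.ball_mem_nhds _ (div_pos hε hap)) ?_
    intro w hw
    have hwin : ⟪u, (w : Euc n)⟫ = (0 : ℝ) :=
      Submodule.mem_orthogonal_singleton_iff_inner_right.mp w.2
    set ap : ℝ := aC u x p with hapdef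
    set gp : Euc n := gP u x p with hgpdef
    have hpd : p = x + ap • u + ap • gp := decomp x hap.ne'
    have hρ : ⟪u, ap • (w : Euc n)⟫ = (0 : ℝ) := by
      rw [real_inner_smul_right, hwin, mul_zero]
    have haz : aC u x (x + ap • u + ap • (w : Euc n)) = ap := aC_shift x hu _ hρ
    have hgz : gP u x (x + ap • u + ap • (w : Euc n)) = (w : Euc n) := by
      rw [gP_shift x hu _ hρ, inv_smul_smul₀ hap.ne']
    have hwdist : ‖(w : Euc n) - gp‖ < ε / ap := by
      have := mem_ball.mp hw
      rwa [Subtype.dist_eq, dist_eq_norm] at this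
    clear_value ap gp
    set z : Euc n := x + ap • u + ap • (w : Euc n) with hzdef
    have hz_ball : z ∈ ball p ε := by
      rw [mem_ball, dist_eq_norm]
      have hzp : z - p = ap • ((w : Euc n) - gp) := by
        rw [hzdef, hpd]
        module
      rw [hzp, norm_smul, Real.norm_eq_abs, abs_of_pos hap]
      calc ap * ‖(w : Euc n) - gp‖
          < ap * (ε / ap) := mul_lt_mul_of_pos_left hwdist hap
        _ = ε := by field_simp
    have hz_cone : z ∈ solidCone K x := hball hz_ball
    rw [hCone] at hz_cone
    rcases hz_cone with hzx | ⟨_, y, hy, hgy⟩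
    · rw [mem_singleton_iff] at hzx
      rw [hzx] at haz
      rw [aC_self] at haz
      exact absurd haz.symm hap.ne'
    · refine ⟨y, hy, ?_⟩
      apply Subtype.ext
      simp only [hg'def]
      rw [hgy, hgz]
  -- Lemma B
  have lemB : ∀ z : Euc n, 0 < aC u x z → g' z ∈ interior B →
      z ∈ interior (solidCone K x) := by
    intro z haz hzB
    have hVopen : IsOpen (U ∩ g' ⁻¹' interior B) :=
      hg'cont.isOpen_inter_preimage hUopen isOpen_interior
    refine mem_interior.mpr ⟨U ∩ g' ⁻¹' interior B, ?_, hVopen, ⟨haz, hzB⟩⟩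
    rintro w ⟨hwU, hwB⟩
    rw [hCone]
    right
    obtain ⟨y, hy, hgy⟩ := interior_subset hwB
    refine ⟨((hUmem w).mp hwU).ne', y, hy, ?_⟩
    have := congrArg Subtype.val hgy
    simpa [hg'def] using this
  -- interior of B nonempty
  have hBint : (interior B).Nonempty := by
    obtain ⟨p, hp⟩ := hKint
    exact ⟨g' p, lemA p (hpos p (interior_subset hp)) (interior_mono hKsub hp)⟩
  -- the gauge homeomorphism
  obtain ⟨h, hhi, hhc, hhf⟩ :=
    exists_homeomorph_image_interior_closure_frontier_eq_unitBall
      hBconv hBint hBcompact.isBounded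
  -- characterization of the graze
  set M : Set (Euc n) := supportCone K x ∩ frontier K with hMdef
  have hfrK : frontier K ⊆ K := hKc.isClosed.frontier_subset
  have hBfr : frontier B ⊆ B := hBclosed.frontier_subset
  have hMchar : ∀ z, z ∈ M ↔ z ∈ frontier K ∧ g' z ∈ frontier B := by
    intro z
    constructor
    · rintro ⟨hzc, hzK⟩
      refine ⟨hzK, ?_⟩
      have hzmem : z ∈ K := hfrK hzK
      have hzpos : 0 < aC u x z := hpos z hzmem
      have hzB : g' z ∈ B := ⟨z, hzmem, rfl⟩
      refine ⟨subset_closure hzB, fun hint => ?_⟩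
      exact hzc.2 (lemB z hzpos hint)
    · rintro ⟨hzK, hzB⟩
      have hzmem : z ∈ K := hfrK hzK
      have hzpos : 0 < aC u x z := hpos z hzmem
      refine ⟨⟨?_, fun hint => hzB.2 (lemA z hzpos hint)⟩, hzK⟩
      exact subset_closure (hKsub hzmem)
  -- injectivity on the graze
  have hinj : ∀ y z, y ∈ M → z ∈ M → g' y = g' z → y = z := by
    intro y z hyM hzM hg
    by_contra hne
    have hyK : y ∈ K := hfrK ((hMchar y).mp hyM).1
    have hzK : z ∈ K := hfrK ((hMchar z).mp hzM).1
    have hay := hpos y hyK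
    have haz := hpos z hzK
    have hgval : gP u x y = gP u x z := by
      have := congrArg Subtype.val hg
      simpa [hg'def] using this
    have hmid : (2⁻¹ : ℝ) • y + (2⁻¹ : ℝ) • z ∈ interior K :=
      hKs hyK hzK hne (by norm_num) (by norm_num) (by norm_num)
    set m : Euc n := (2⁻¹ : ℝ) • y + (2⁻¹ : ℝ) • z with hmdef
    set am : ℝ := (aC u x y + aC u x z) / 2 with hamdef
    have ham : 0 < am := by rw [hamdef]; linarith
    have hy1 := decomp x hay.ne'
    have hz1 := decomp x haz.ne'
    rw [← hgval] at hz1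
    have hmeq : m = x + am • u + am • gP u x y := by
      rw [hmdef, hamdef]
      nth_rewrite 1 [hy1]
      nth_rewrite 1 [hz1]
      match_scalars <;> ring
    have hρ : ⟪u, am • gP u x y⟫ = (0 : ℝ) := by
      rw [real_inner_smul_right, inner_gP x hu, mul_zero]
    have hgm : gP u x m = gP u x y := by
      rw [hmeq, gP_shift x hu _ hρ, inv_smul_smul₀ ham.ne']
    have ham' : 0 < aC u x m := by
      rw [hmeq, aC_shift x hu _ hρ]; exact ham
    have hmint : g' m ∈ interior B :=
      lemA m ham' (interior_mono hKsub hmid)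
    have : g' m = g' y := by
      apply Subtype.ext
      simp only [hg'def]
      rw [hgm]
    rw [this] at hmint
    exact (((hMchar y).mp hyM).2).2 hmint
  -- surjectivity onto frontier B
  have hsurj : ∀ b : ↥W, b ∈ frontier B → ∃ z ∈ M, g' z = b := by
    intro b hb
    obtain ⟨y, hy, rfl⟩ := hBfr hb
    have hyfr : y ∈ frontier K := by
      refine ⟨subset_closure hy, fun hint => ?_⟩
      exact hb.2 (lemA y (hpos y hy) (interior_mono hKsub hint))
    exact ⟨y, (hMchar y).mpr ⟨hyfr, hb⟩, rfl⟩
  -- M is compact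
  have hMclosed : IsClosed M := isClosed_frontier.inter isClosed_frontier
  have hMK : M ⊆ K := fun z hz => hfrK hz.2
  have hMcompact : IsCompact M := hKc.of_isClosed_subset hMclosed hMK
  haveI : CompactSpace ↥M := isCompact_iff_compactSpace.mp hMcompact
  -- the homeomorphism M ≃ frontier B
  set G : ↥M → ↥(frontier B) := fun z => ⟨g' z.1, ((hMchar z.1).mp z.2).2⟩ with hGdef
  have hGcont : Continuous G := by
    apply Continuous.subtype_mk
    exact hg'cont.comp_continuous continuous_subtype_val fun z => hKU (hMK z.2)
  have hGbij : Function.Bijective G := by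
    constructor
    · intro z1 z2 hz
      apply Subtype.ext
      exact hinj z1.1 z2.1 z1.2 z2.2 (Subtype.ext_iff.mp hz)
    · intro b
      obtain ⟨z, hzM, hgz⟩ := hsurj b.1 b.2
      exact ⟨⟨z, hzM⟩, Subtype.ext hgz⟩
  set eG : ↥M ≃ ↥(frontier B) := Equiv.ofBijective G hGbij with heGdef
  have heGcont : Continuous eG := hGcont
  set homeoG : ↥M ≃ₜ ↥(frontier B) := heGcont.homeoOfEquivCompactToT2 with hhomeoGdef
  -- the isometry between the model sphere and the unit sphere of W
  haveI hfact : Fact (Module.finrank ℝ (Euc n) = (n - 2 + 1) + 1) :=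
    ⟨by rw [finrank_euclideanSpace_fin]; omega⟩
  have hune : u ≠ 0 := by
    intro h0
    rw [h0, norm_zero] at hu
    norm_num at hu
  set ψ : EuclideanSpace ℝ (Fin (n - 2 + 1)) ≃ₗᵢ[ℝ] ↥W :=
    (OrthonormalBasis.fromOrthogonalSpanSingleton (𝕜 := ℝ) (n - 2 + 1) hune).repr.symm
    with hψdef
  have hψs : ∀ s : ↥(Metric.sphere (0 : Euc (n - 2 + 1)) 1),
      h.symm (ψ s.1) ∈ frontier B := by
    intro s
    have hs1 : ψ s.1 ∈ Metric.sphere (0 : ↥W) 1 := by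
      rw [mem_sphere_zero_iff_norm, ψ.norm_map]
      exact mem_sphere_zero_iff_norm.mp s.2
    rw [← hhf] at hs1
    obtain ⟨w, hw, hws⟩ := hs1
    rw [← hws, Homeomorph.symm_apply_apply]
    exact hw
  -- the final map
  refine ⟨fun s => ((homeoG.symm ⟨h.symm (ψ s.1), hψs s⟩ : ↥M) : Euc n), ?_, ?_, ?_⟩
  · apply continuous_subtype_val.comp
    apply homeoG.symm.continuous.comp
    apply Continuous.subtype_mk
    exact h.symm.continuous.comp (ψ.continuous.comp continuous_subtype_val)
  · intro s1 s2 heq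
    have h1 : (homeoG.symm ⟨h.symm (ψ s1.1), hψs s1⟩ : ↥M)
        = homeoG.symm ⟨h.symm (ψ s2.1), hψs s2⟩ := Subtype.ext heq
    have h2 := homeoG.symm.injective h1
    have h3 : h.symm (ψ s1.1) = h.symm (ψ s2.1) := Subtype.ext_iff.mp h2
    have h4 := ψ.injective (h.symm.injective h3)
    exact Subtype.ext h4
  · ext z
    constructor
    · rintro ⟨s, rfl⟩
      exact (homeoG.symm ⟨h.symm (ψ s.1), hψs s⟩ : ↥M).2
    · intro hz
      set w : ↥(frontier B) := homeoG ⟨z, hz⟩ with hwdef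
      have hhw : h w.1 ∈ Metric.sphere (0 : ↥W) 1 := by
        rw [← hhf]
        exact ⟨w.1, w.2, rfl⟩
      have hsph : ψ.symm (h w.1) ∈ Metric.sphere (0 : Euc (n - 2 + 1)) 1 := by
        rw [mem_sphere_zero_iff_norm, ψ.symm.norm_map]
        exact mem_sphere_zero_iff_norm.mp hhw
      refine ⟨⟨ψ.symm (h w.1), hsph⟩, ?_⟩
      have hcoe : (⟨h.symm (ψ (ψ.symm (h w.1))), hψs ⟨ψ.symm (h w.1), hsph⟩⟩ : ↥(frontier B))
          = w := by
        apply Subtype.ext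
        show h.symm (ψ (ψ.symm (h w.1))) = w.1
        rw [ψ.apply_symm_apply, Homeomorph.symm_apply_apply]
      show ((homeoG.symm _ : ↥M) : Euc n) = z
      rw [hcoe, hwdef, Homeomorph.symm_apply_apply]
end
end

section
/- Let n ≥ 3, let K ⊂ ℝ^n be a strictly convex body, let x, y ∈ ℝ^n \ K with y ≠ x, and suppose there exists p ∈ ℝ^n with C_y = p + C_x. Then C_y = (x + y) − C_x, and the set Λ = C_x ∩ C_y is centrally symmetric with center (x + y)/2. -/
open Set Metric RealInnerProductSpace

noncomputable section

lemma mem_solidCone_iff {n : ℕ} {K : Set (Euc n)} {x z : Euc n} :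
    z ∈ solidCone K x ↔ ∃ k ∈ K, ∃ t : ℝ, z = x + t • (k - x) := by
  simp only [solidCone, mem_iUnion, exists_prop]
  refine exists_congr fun k => and_congr_right fun _ => ?_
  rw [SetLike.mem_coe]
  constructor
  · intro hz
    have h : (z - x) +ᵥ x ∈ line[ℝ, x, k] := by
      simpa [vadd_eq_add, sub_add_cancel] using hz
    rcases vadd_left_mem_affineSpan_pair.1 h with ⟨r, hr⟩
    refine ⟨r, ?_⟩
    have : r • (k - x) = z - x := by simpa [vsub_eq_sub] using hr
    rw [this]; abel
  · rintro ⟨t, rfl⟩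
    have := smul_vsub_vadd_mem_affineSpan_pair (k := ℝ) t x k
    simpa [vsub_eq_sub, vadd_eq_add, add_comm] using this

lemma mem_solidCone {n : ℕ} {K : Set (Euc n)} {x k : Euc n} (hk : k ∈ K) (t : ℝ) :
    x + t • (k - x) ∈ solidCone K x :=
  mem_solidCone_iff.2 ⟨k, hk, t, rfl⟩

lemma isClosed_solidCone {n : ℕ} {K : Set (Euc n)} {x : Euc n}
    (hc : IsCompact K) (hne : K.Nonempty) (hx : x ∉ K) : IsClosed (solidCone K x) := by
  have hKcl : IsClosed K := hc.isClosed
  have hd : 0 < infDist x K := by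
    rw [← hKcl.notMem_iff_infDist_pos hne]; exact hx
  set d := infDist x K with hdd
  -- every point of K is at distance ≥ d from x
  have hdk : ∀ k ∈ K, d ≤ ‖k - x‖ := by
    intro k hk
    have := infDist_le_dist_of_mem (x := x) hk
    rwa [dist_eq_norm, norm_sub_rev] at this
  rw [← closure_subset_iff_isClosed]
  intro z hz
  set M : ℝ := (dist z x + 1) / d with hM
  set g : ℝ × Euc n → Euc n := fun p => x + p.1 • (p.2 - x) with hg
  have hgc : Continuous g := by fun_prop
  have hQc : IsCompact (g '' (Icc (-M) M ×ˢ K)) :=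
    ((isCompact_Icc).prod hc).image hgc
  have hsub : solidCone K x ∩ ball z 1 ⊆ g '' (Icc (-M) M ×ˢ K) := by
    rintro s ⟨hs, hsb⟩
    rcases mem_solidCone_iff.1 hs with ⟨k, hk, t, rfl⟩
    refine ⟨(t, k), ⟨?_, hk⟩, rfl⟩
    have h1 : ‖t • (k - x)‖ ≤ dist z x + 1 := by
      have : dist (x + t • (k - x)) z < 1 := mem_ball.1 hsb
      calc ‖t • (k - x)‖ = dist (x + t • (k - x)) x := by
            rw [dist_eq_norm]; congr 1; abel
        _ ≤ dist (x + t • (k - x)) z + dist z x := dist_triangle _ _ _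
        _ ≤ dist z x + 1 := by linarith
    have h2 : |t| * d ≤ dist z x + 1 := by
      calc |t| * d ≤ |t| * ‖k - x‖ := by
            exact mul_le_mul_of_nonneg_left (hdk k hk) (abs_nonneg t)
        _ = ‖t • (k - x)‖ := (norm_smul t (k - x)).symm
        _ ≤ dist z x + 1 := h1
    have h3 : |t| ≤ M := by
      rw [hM, le_div_iff₀ hd]; linarith
    exact abs_le.1 h3
  have hz1 : z ∈ closure (solidCone K x ∩ ball z 1) := by
    have : ball z 1 ∩ closure (solidCone K x) ⊆ closure (ball z 1 ∩ solidCone K x) :=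
      (isOpen_ball).inter_closure
    have hzz := this ⟨mem_ball_self one_pos, hz⟩
    rwa [inter_comm] at hzz
  have : z ∈ g '' (Icc (-M) M ×ˢ K) :=
    hQc.isClosed.closure_subset ((closure_mono hsub) hz1)
  rcases this with ⟨⟨t, k⟩, ⟨_, hk⟩, rfl⟩
  exact mem_solidCone_iff.2 ⟨k, hk, t, rfl⟩

/-- the scaling-about-`x` homeomorphism -/
def scaleHomeo {n : ℕ} (x : Euc n) (c : ℝ) (hc : c ≠ 0) : Euc n ≃ₜ Euc n where
  toFun z := x + c • (z - x)
  invFun z := x + c⁻¹ • (z - x)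
  left_inv z := by
    simp only [add_sub_cancel_left, smul_smul, inv_mul_cancel₀ hc, one_smul]; abel
  right_inv z := by
    simp only [add_sub_cancel_left, smul_smul, mul_inv_cancel₀ hc, one_smul]; abel
  continuous_toFun := by fun_prop
  continuous_invFun := by fun_prop

/-- the point-reflection homeomorphism `z ↦ a - z` -/
def reflHomeo {n : ℕ} (a : Euc n) : Euc n ≃ₜ Euc n where
  toFun z := a - z
  invFun z := a - z
  left_inv z := by module
  right_inv z := by module
  continuous_toFun := by fun_prop
  continuous_invFun := by fun_prop

lemma scale_image_solidCone {n : ℕ} {K : Set (Euc n)} {x : Euc n} (c : ℝ) (hc : c ≠ 0) :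
    (fun z => x + c • (z - x)) '' solidCone K x = solidCone K x := by
  apply Subset.antisymm
  · rintro _ ⟨z, hz, rfl⟩
    rcases mem_solidCone_iff.1 hz with ⟨k, hk, t, rfl⟩
    refine mem_solidCone_iff.2 ⟨k, hk, c * t, ?_⟩
    simp only [add_sub_cancel_left, smul_smul]
  · intro z hz
    refine ⟨x + c⁻¹ • (z - x), ?_, ?_⟩
    · rcases mem_solidCone_iff.1 hz with ⟨k, hk, t, rfl⟩
      refine mem_solidCone_iff.2 ⟨k, hk, c⁻¹ * t, ?_⟩
      simp only [add_sub_cancel_left, smul_smul]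
    · simp only [add_sub_cancel_left, smul_smul, mul_inv_cancel₀ hc, one_smul]; abel

lemma refl_image_solidCone {n : ℕ} {K : Set (Euc n)} {x : Euc n} :
    (fun z => (x + x) - z) '' solidCone K x = solidCone K x := by
  have key : ∀ z ∈ solidCone K x, (x + x) - z ∈ solidCone K x := by
    intro z hz
    rcases mem_solidCone_iff.1 hz with ⟨k, hk, t, rfl⟩
    refine mem_solidCone_iff.2 ⟨k, hk, -t, ?_⟩
    rw [neg_smul]; abel
  apply Subset.antisymm
  · rintro _ ⟨z, hz, rfl⟩; exact key z hz
  · intro z hz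
    exact ⟨(x + x) - z, key z hz, by module⟩

lemma scale_image_supportCone {n : ℕ} {K : Set (Euc n)} {x : Euc n} (c : ℝ) (hc : c ≠ 0) :
    (fun z => x + c • (z - x)) '' supportCone K x = supportCone K x := by
  have h := (scaleHomeo x c hc).image_frontier (solidCone K x)
  have h2 : (scaleHomeo x c hc) '' solidCone K x = solidCone K x :=
    scale_image_solidCone c hc
  rw [supportCone]
  calc (fun z => x + c • (z - x)) '' frontier (solidCone K x)
      = (scaleHomeo x c hc) '' frontier (solidCone K x) := rfl
    _ = frontier ((scaleHomeo x c hc) '' solidCone K x) := h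
    _ = frontier (solidCone K x) := by rw [h2]

lemma refl_image_supportCone {n : ℕ} {K : Set (Euc n)} {x : Euc n} :
    (fun z => (x + x) - z) '' supportCone K x = supportCone K x := by
  have h := (reflHomeo (x + x)).image_frontier (solidCone K x)
  have h2 : (reflHomeo (x + x)) '' solidCone K x = solidCone K x := refl_image_solidCone
  rw [supportCone]
  calc (fun z => (x + x) - z) '' frontier (solidCone K x)
      = (reflHomeo (x + x)) '' frontier (solidCone K x) := rfl
    _ = frontier ((reflHomeo (x + x)) '' solidCone K x) := h
    _ = frontier (solidCone K x) := by rw [h2]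

lemma rigid {n : ℕ} (hn : 3 ≤ n) {K : Set (Euc n)} {x : Euc n}
    (hc : IsCompact K) (hconv : Convex ℝ K) (hint : (interior K).Nonempty)
    (hx : x ∉ K) {w : Euc n}
    (hw : (fun z => w + z) '' supportCone K x = supportCone K x) : w = 0 := by
  obtain ⟨z₀, hz₀⟩ := hint
  have hz₀K : z₀ ∈ K := interior_subset hz₀
  have hne : K.Nonempty := ⟨z₀, hz₀K⟩
  set S := solidCone K x with hS
  set F := supportCone K x with hF
  have hScl : IsClosed S := isClosed_solidCone hc hne hx
  have hFS : F ⊆ S := by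
    rw [hF, supportCone, ← hScl.closure_eq]; exact frontier_subset_closure
  -- membership versions of invariance
  have hscale : ∀ c : ℝ, c ≠ 0 → ∀ z ∈ F, x + c • (z - x) ∈ F := by
    intro c hc0 z hz
    exact (scale_image_supportCone (x := x) (K := K) c hc0).le (mem_image_of_mem _ hz)
  have htrans : ∀ z ∈ F, w + z ∈ F := by
    intro z hz
    exact hw.le (mem_image_of_mem _ hz)
  -- F is invariant under all real multiples of w
  have hFw : ∀ t : ℝ, ∀ z ∈ F, z + t • w ∈ F := by
    intro t z hz
    rcases eq_or_ne t 0 with rfl | ht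
    · simpa using hz
    · have h1 : x + t⁻¹ • (z - x) ∈ F := hscale t⁻¹ (inv_ne_zero ht) z hz
      have h2 : w + (x + t⁻¹ • (z - x)) ∈ F := htrans _ h1
      have h3 : x + t • ((w + (x + t⁻¹ • (z - x))) - x) ∈ F := hscale t ht _ h2
      have : x + t • ((w + (x + t⁻¹ • (z - x))) - x) = z + t • w := by
        have hti : t • (t⁻¹ • (z - x)) = z - x := by
          rw [smul_smul, mul_inv_cancel₀ ht, one_smul]
        calc x + t • ((w + (x + t⁻¹ • (z - x))) - x)
            = x + t • w + t • (t⁻¹ • (z - x)) := by rw [smul_comm] <;> module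
          _ = z + t • w := by rw [hti]; abel
      rwa [this] at h3
  -- rays from points of S in direction w stay in S
  have hray : ∀ z ∈ S, ∀ t : ℝ, z + t • w ∈ S := by
    intro z hz t
    by_contra hout
    set u := t • w with hu
    have hFu : ∀ s : ℝ, ∀ c ∈ F, c + s • u ∈ F := by
      intro s c hcF
      have := hFw (s * t) c hcF
      simpa [hu, smul_smul] using this
    set B := {s : ℝ | s ∈ Icc (0:ℝ) 1 ∧ z + s • u ∉ S} with hB
    have h1B : (1:ℝ) ∈ B := ⟨⟨zero_le_one, le_refl 1⟩, by simpa [hu] using hout⟩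
    have hBne : B.Nonempty := ⟨1, h1B⟩
    have hBbdd : BddBelow B := ⟨0, fun b hb => hb.1.1⟩
    set T := sInf B with hT
    have hT0 : 0 ≤ T := le_csInf hBne (fun b hb => hb.1.1)
    have hT1 : T ≤ 1 := csInf_le hBbdd h1B
    -- z + T • u ∈ S
    have hTS : z + T • u ∈ S := by
      rcases eq_or_lt_of_le hT0 with h0 | h0
      · rw [← h0, zero_smul, add_zero]; exact hz
      · have hIco : ∀ s ∈ Ico (0:ℝ) T, z + s • u ∈ S := by
          intro s hs
          by_contra hns
          have : s ∈ B := ⟨⟨hs.1, hs.2.le.trans hT1⟩, hns⟩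
          exact absurd (csInf_le hBbdd this) (not_le.2 hs.2)
        have htend : Filter.Tendsto (fun s : ℝ => z + s • u) (nhdsWithin T (Iio T)) (nhds (z + T • u)) := by
          apply Filter.Tendsto.mono_left _ nhdsWithin_le_nhds
          exact (continuous_const.add (continuous_id.smul continuous_const)).tendsto T
        have hev : ∀ᶠ s in nhdsWithin T (Iio T), z + s • u ∈ S := by
          filter_upwards [Ioo_mem_nhdsLT_of_mem (⟨h0, le_refl T⟩ :
            T ∈ Ioc (0:ℝ) T)] with s hs
          exact hIco s ⟨hs.1.le, hs.2⟩
        have : z + T • u ∈ closure S := mem_closure_of_tendsto htend hev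
        rwa [hScl.closure_eq] at this
    have hTcl : z + T • u ∈ closure Sᶜ := by
      have hTB : T ∈ closure B := csInf_mem_closure hBne hBbdd
      have hcont : Continuous (fun s : ℝ => z + s • u) :=
        continuous_const.add (continuous_id.smul continuous_const)
      have himg : (fun s : ℝ => z + s • u) '' B ⊆ Sᶜ := by
        rintro _ ⟨s, hs, rfl⟩; exact hs.2
      have h1 := image_closure_subset_closure_image hcont (s := B)
      have h2 : z + T • u ∈ closure ((fun s : ℝ => z + s • u) '' B) := h1 ⟨T, hTB, rfl⟩
      exact closure_mono himg h2
    have hfr : z + T • u ∈ F := by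
      rw [hF, supportCone, frontier_eq_closure_inter_closure, hScl.closure_eq]
      exact ⟨hTS, hTcl⟩
    have hinF : (z + T • u) + (1 - T) • u ∈ F := hFu (1 - T) _ hfr
    have heq : (z + T • u) + (1 - T) • u = z + u := by module
    rw [heq] at hinF
    exact hout (hFS hinF)
  -- Hahn–Banach separation of x from K
  obtain ⟨f, u₀, hfx, hfk⟩ := geometric_hahn_banach_point_closed hconv hc.isClosed hx
  have hxS : x ∈ S := by
    rw [hS]; exact mem_solidCone_iff.2 ⟨z₀, hz₀K, 0, by simp⟩
  have hkey : ∀ z ∈ S, f z = f x → z = x := by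
    intro z hzS hfz
    rcases mem_solidCone_iff.1 (by rwa [hS] at hzS) with ⟨k, hk, t, rfl⟩
    have h1 : f (x + t • (k - x)) = f x + t * (f k - f x) := by
      simp only [map_add, map_smul, map_sub, smul_eq_mul]
    have h2 : t * (f k - f x) = 0 := by rw [h1] at hfz; linarith
    have h3 : f k - f x > 0 := by have := hfk k hk; linarith
    have ht : t = 0 := by
      rcases mul_eq_zero.1 h2 with h | h
      · exact h
      · linarith
    rw [ht]; simp
  by_cases hfw : f w = 0
  · have h1 : x + (1:ℝ) • w ∈ S := hray x hxS 1
    have h2 : f (x + (1:ℝ) • w) = f x := by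
      simp only [map_add, map_smul, smul_eq_mul, one_mul, hfw, add_zero]
    have h3 := hkey _ h1 h2
    have : (1:ℝ) • w = 0 := by
      have := congrArg (fun z => z - x) h3
      simpa using this
    simpa using this
  · exfalso
    have hw0 : w ≠ 0 := fun h => hfw (by simp [h])
    have hline : ∀ k ∈ K, ∃ s : ℝ, k = x + s • w := by
      intro k hk
      have hzS : x + (-1:ℝ) • (k - x) ∈ S := by
        rw [hS]; exact mem_solidCone_iff.2 ⟨k, hk, -1, rfl⟩
      set t := (f k - f x) / f w with htdef
      have h1 : x + (-1:ℝ) • (k - x) + t • w ∈ S := hray _ hzS t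
      have h2 : f (x + (-1:ℝ) • (k - x) + t • w) = f x := by
        simp only [map_add, map_smul, map_sub, smul_eq_mul, neg_one_mul, htdef]
        field_simp
        try ring
      have h3 := hkey _ h1 h2
      refine ⟨t, ?_⟩
      have h6 : x + t • w - k = (x + (-1:ℝ) • (k - x) + t • w) - x := by module
      rw [h3, sub_self] at h6
      exact (sub_eq_zero.1 h6).symm
    obtain ⟨ε, hε, hball⟩ := Metric.mem_nhds_iff.1 (mem_interior_iff_mem_nhds.1 hz₀)
    obtain ⟨s₀, hs₀⟩ := hline z₀ hz₀K
    have hspan : ∀ v : Euc n, ‖v‖ < ε → v ∈ Submodule.span ℝ ({w} : Set (Euc n)) := by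
      intro v hv
      have hvK : z₀ + v ∈ K := hball (by rw [mem_ball, dist_eq_norm]; simpa using hv)
      obtain ⟨s₁, hs₁⟩ := hline _ hvK
      have hveq : v = (s₁ - s₀) • w := by
        have e3 : v = (x + s₁ • w) - (x + s₀ • w) := by rw [← hs₁, ← hs₀]; abel
        rw [e3]; module
      rw [hveq]
      exact Submodule.smul_mem _ _ (Submodule.mem_span_singleton_self w)
    have htop : Submodule.span ℝ ({w} : Set (Euc n)) = ⊤ := by
      rw [Submodule.eq_top_iff']
      intro v
      rcases eq_or_ne v 0 with rfl | hv0
      · exact Submodule.zero_mem _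
      · have hvn : (0:ℝ) < ‖v‖ := norm_pos_iff.2 hv0
        have h1 : ‖(ε / 2 / ‖v‖) • v‖ < ε := by
          rw [norm_smul, Real.norm_eq_abs, abs_of_pos (by positivity)]
          rw [div_mul_cancel₀ _ (ne_of_gt hvn)]
          linarith
        have h2 := hspan _ h1
        have h3 : v = (‖v‖ / (ε / 2)) • ((ε / 2 / ‖v‖) • v) := by
          rw [smul_smul]
          rw [show ‖v‖ / (ε / 2) * (ε / 2 / ‖v‖) = 1 by field_simp]
          rw [one_smul]
        rw [h3]; exact Submodule.smul_mem _ _ h2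
    have hdim1 : Module.finrank ℝ (Submodule.span ℝ ({w} : Set (Euc n))) = 1 :=
      finrank_span_singleton hw0
    rw [htop, finrank_top] at hdim1
    have hdn : Module.finrank ℝ (Euc n) = n := finrank_euclideanSpace_fin
    omega

/-- If `C_y` is a translate of `C_x`, then `C_y = (x + y) - C_x`
and `Λ = C_x ∩ C_y` is centrally symmetric with center `(x + y)/2`. -/
theorem stmt_3 (n : ℕ) (hn : 3 ≤ n) (K : Set (Euc n))
    (hK : IsConvexBody K) (hKs : StrictConvex ℝ K)
    (x y : Euc n) (hx : x ∉ K) (hy : y ∉ K) (hxy : y ≠ x)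
    (p : Euc n) (hp : supportCone K y = (fun z => p + z) '' supportCone K x) :
    supportCone K y = (fun z => (x + y) - z) '' supportCone K x ∧
      supportCone K x ∩ supportCone K y =
        (fun z => (2 : ℝ) • ((1 / 2 : ℝ) • (x + y)) - z) ''
          (supportCone K x ∩ supportCone K y) := by
  obtain ⟨hc, hconv, hint⟩ := hK
  have hsx : (fun z => (x + x) - z) '' supportCone K x = supportCone K x :=
    refl_image_supportCone
  have hsy : (fun z => (y + y) - z) '' supportCone K y = supportCone K y :=
    refl_image_supportCone
  -- step 1: C_y is also the image of C_x under z ↦ (y+y-p-(x+x)) + z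
  have h2 : supportCone K y = (fun z => (y + y - p - (x + x)) + z) '' supportCone K x := by
    conv_lhs => rw [← hsy, hp, ← hsx]
    simp only [image_image]
    exact congrArg (fun g => g '' supportCone K x) (funext fun z => by abel)
  -- step 2: translation invariance of C_x
  have h4 : (fun z => ((y + y - p - (x + x)) - p) + z) '' supportCone K x
      = supportCone K x := by
    calc (fun z => ((y + y - p - (x + x)) - p) + z) '' supportCone K x
        = (fun z => -p + z) ''
            ((fun z => (y + y - p - (x + x)) + z) '' supportCone K x) := by
          rw [image_image]
          exact congrArg (fun g => g '' supportCone K x) (funext fun z => by abel)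
      _ = (fun z => -p + z) '' supportCone K y := by rw [← h2]
      _ = (fun z => -p + z) '' ((fun z => p + z) '' supportCone K x) := by rw [hp]
      _ = supportCone K x := by simp only [image_image, neg_add_cancel_left, image_id']
  have hw0 : (y + y - p - (x + x)) - p = 0 := rigid hn hc hconv hint hx h4
  have hpeq : p = y - x := by
    have h7 : (2:ℝ) • (p - (y - x)) = -((y + y - p - (x + x)) - p) := by module
    rw [hw0, neg_zero] at h7
    have h8 := smul_eq_zero.mp h7
    rcases h8 with h8 | h8
    · norm_num at h8
    · exact sub_eq_zero.mp h8
  -- Goal 1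
  have goal1 : supportCone K y = (fun z => (x + y) - z) '' supportCone K x := by
    rw [hp, hpeq]
    conv_rhs => rw [← hsx]
    rw [image_image]
    exact congrArg (fun g => g '' supportCone K x) (funext fun z => by abel)
  refine ⟨goal1, ?_⟩
  -- Goal 2
  have hcenter : (fun z : Euc n => (2 : ℝ) • ((1 / 2 : ℝ) • (x + y)) - z)
      = (fun z => (x + y) - z) := by
    funext z
    rw [smul_smul]
    norm_num
  rw [hcenter]
  have hinj : Function.Injective (fun z : Euc n => (x + y) - z) :=
    fun a b hab => sub_right_injective hab
  have himg_y : (fun z => (x + y) - z) '' supportCone K y = supportCone K x := by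
    rw [goal1, image_image]
    have : (fun z : Euc n => (x + y) - ((x + y) - z)) = id := by
      funext z; simp
    rw [this, image_id]
  rw [image_inter hinj, ← goal1, himg_y, inter_comm]
end
end
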